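/- arXiv:2401.04822 — 2 statements merged into one kernel-verified Lean document; each statement's English description precedes it below -/
import Mathlib

section
/- For every real α ≥ 0, if 0 ≤ 12(1 + α³ − (1+α³)^{5/3}) + 5α³ + 2α⁵ then α = 0. -/
/-!
Both sides are compared through tangent lines of the convex function `x ↦ x ^ (5/3)`.
At `1` the hypothesis forces `α ^ 2 ≥ 3/2` once `α > 0`; at `α ^ 3` it forces
`10 α ^ 5 + 20 α ^ 2 ≤ 12 + 17 α ^ 3`, and the two are incompatible.
-/

open Real

theorem rpow_add_mul_rpow_sub_one_le_add_rpow {a b p : ℝ} (ha : 0 < a) (hb : -a ≤ b)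
    (hp : 1 ≤ p) : a ^ p + p * a ^ (p - 1) * b ≤ (a + b) ^ p := by
  have hs : -1 ≤ b / a := by rwa [le_div_iff₀ ha, neg_one_mul]
  calc a ^ p + p * a ^ (p - 1) * b = a ^ p * (1 + p * (b / a)) := by
        rw [rpow_sub_one ha.ne']; field_simp
    _ ≤ a ^ p * (1 + b / a) ^ p := by
        gcongr; exact one_add_mul_self_le_rpow_one_add hs hp
    _ = (a + b) ^ p := by
        rw [← mul_rpow ha.le (by linarith), mul_add, mul_one, mul_div_cancel₀ _ ha.ne']

theorem pow_rpow_natCast_div_natCast {x : ℝ} (hx : 0 ≤ x) (m : ℕ) {n : ℕ} (hn : n ≠ 0) :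
    (x ^ n) ^ ((m : ℝ) / n) = x ^ m := by
  rw [← rpow_natCast_mul hx, mul_div_cancel₀ _ (Nat.cast_ne_zero.2 hn), rpow_natCast]

theorem alpha_vanishes (α : ℝ) (hα : 0 ≤ α)
    (h : 0 ≤ 12 * (1 + α ^ 3 - (1 + α ^ 3) ^ ((5 : ℝ) / 3)) + 5 * α ^ 3 + 2 * α ^ 5) :
    α = 0 := by
  by_contra hne
  have hpos : 0 < α := lt_of_le_of_ne hα (Ne.symm hne)
  have hcube : 0 < α ^ 3 := pow_pos hpos 3
  have tangent_at_one : 1 + 5 / 3 * α ^ 3 ≤ (1 + α ^ 3) ^ ((5 : ℝ) / 3) :=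
    one_add_mul_self_le_rpow_one_add (by linarith) (by norm_num)
  have tangent_at_cube : α ^ 5 + 5 / 3 * α ^ 2 ≤ (1 + α ^ 3) ^ ((5 : ℝ) / 3) := by
    have tangent := rpow_add_mul_rpow_sub_one_le_add_rpow hcube (b := 1) (by linarith)
      (p := 5 / 3) (by norm_num)
    have h53 := pow_rpow_natCast_div_natCast hα 5 (n := 3) (by norm_num)
    have h23 := pow_rpow_natCast_div_natCast hα 2 (n := 3) (by norm_num)
    norm_num at tangent h53 h23
    rw [h53, h23, add_comm (α ^ 3)] at tangent
    linarith
  have large : 3 / 2 ≤ α ^ 2 := by nlinarith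
  nlinarith [mul_le_mul_of_nonneg_left large hcube.le]
end

section
/- For R > 0 with (4/3)πR³ ≤ 1, define f_R(x) = −(3/(4π))R^{-3}x² + (5R^{-1} + (4/3)πR²)x − 4π^{1/2}x^{1/2} − (64π³/3)R⁶ x^{-1} for x > 0. Then f_R(4πR²) = 0, f_R'(4πR²) ≤ 0, and f_R''(x) < 0 for all x ≥ 4πR². Consequently, if x ≥ 4πR² and f_R(x) ≥ 0 then x = 4πR². -/
/-!
At `x₀ = 4πR²` a direct computation gives `f_R(x₀) = 0` and `f_R'(x₀) = 8πR²/3 - 2/R`, which is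
`≤ 0` exactly when `(4/3)πR³ ≤ 1`. On `[x₀, ∞)` we have `x^{3/2} ≥ 8π^{3/2}R³`, so the only
positive term `√π x^{-3/2}` of `f_R''` is at most `1/(8πR³)`, less than the `3/(2πR³)` subtracted
from it; hence `f_R` is strictly concave there and lies strictly below its nonincreasing tangent
at `x₀`.
-/

open Real Set

theorem lt_of_deriv_nonpos_of_deriv2_neg {f : ℝ → ℝ} {a x : ℝ}
    (hf : ContinuousOn f (Ici a)) (hfa : DifferentiableAt ℝ f a) (ha : deriv f a ≤ 0)
    (hf'' : ∀ y, a < y → deriv (deriv f) y < 0) (hx : a < x) : f x < f a := by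
  have hconc : StrictConcaveOn ℝ (Ici a) f :=
    strictConcaveOn_of_deriv2_neg (convex_Ici a) hf fun y hy => by
      rw [interior_Ici] at hy
      exact hf'' y hy
  have hslope : slope f a x < 0 :=
    (hconc.slope_lt_deriv self_mem_Ici hx.le hx hfa).trans_le ha
  rw [slope_def_field, div_neg_iff] at hslope
  rcases hslope with ⟨-, h⟩ | ⟨h, -⟩ <;> linarith

noncomputable def fR (R x : ℝ) : ℝ :=
  -(3 / (4 * π)) * R⁻¹ ^ 3 * x ^ 2 + (5 * R⁻¹ + 4 / 3 * π * R ^ 2) * x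
    - 4 * √π * √x - 64 * π ^ 3 / 3 * R ^ 6 * x⁻¹

noncomputable def fR' (R x : ℝ) : ℝ :=
  -(3 / (2 * π)) * R⁻¹ ^ 3 * x + (5 * R⁻¹ + 4 / 3 * π * R ^ 2)
    - 2 * √π / √x + 64 * π ^ 3 / 3 * R ^ 6 / x ^ 2

noncomputable def fR'' (R x : ℝ) : ℝ :=
  -(3 / (2 * π)) * R⁻¹ ^ 3 + √π / (x * √x) - 128 * π ^ 3 / 3 * R ^ 6 / x ^ 3

variable {R x : ℝ}

theorem hasDerivAt_fR (R : ℝ) (hx : 0 < x) : HasDerivAt (fR R) (fR' R x) x := by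
  have hsq := (hasDerivAt_pow 2 x).const_mul (-(3 / (4 * π)) * R⁻¹ ^ 3)
  have hlin := (hasDerivAt_id' x).const_mul (5 * R⁻¹ + 4 / 3 * π * R ^ 2)
  have hsqrt := (hasDerivAt_sqrt hx.ne').const_mul (4 * √π)
  have hinv := (hasDerivAt_inv hx.ne').const_mul (64 * π ^ 3 / 3 * R ^ 6)
  refine (((hsq.add hlin).sub hsqrt).sub hinv).congr_deriv ?_
  have : √x ≠ 0 := (sqrt_pos.2 hx).ne'
  simp only [fR']
  field_simp
  ring

theorem hasDerivAt_fR' (R : ℝ) (hx : 0 < x) : HasDerivAt (fR' R) (fR'' R x) x := by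
  have hs : 0 < √x := sqrt_pos.2 hx
  have hlin := ((hasDerivAt_id' x).const_mul (-(3 / (2 * π)) * R⁻¹ ^ 3)).add_const
    (5 * R⁻¹ + 4 / 3 * π * R ^ 2)
  have hinvsqrt := (hasDerivAt_const x (2 * √π)).div (hasDerivAt_sqrt hx.ne') hs.ne'
  have hinvsq := (hasDerivAt_const x (64 * π ^ 3 / 3 * R ^ 6)).div (hasDerivAt_pow 2 x)
    (by positivity)
  refine ((hlin.sub hinvsqrt).add hinvsq).congr_deriv ?_
  have hsq : √x ^ 2 = x := sq_sqrt hx.le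
  simp only [fR'']
  have hcube : √x ^ 3 = x * √x := by rw [pow_succ, hsq, mul_comm]
  field_simp
  rw [hcube, hsq]
  ring

theorem deriv_deriv_fR (R : ℝ) (hx : 0 < x) : deriv (deriv (fR R)) x = fR'' R x := by
  have hderiv : deriv (fR R) =ᶠ[nhds x] fR' R := by
    filter_upwards [eventually_gt_nhds hx] with y hy using (hasDerivAt_fR R hy).deriv
  rw [hderiv.deriv_eq, (hasDerivAt_fR' R hx).deriv]

theorem sqrt_four_pi_mul_sq (hR : 0 ≤ R) : √(4 * π * R ^ 2) = 2 * √π * R := by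
  rw [show 4 * π * R ^ 2 = (2 * √π * R) ^ 2 by rw [mul_pow, mul_pow, sq_sqrt pi_pos.le]; ring]
  exact sqrt_sq (by positivity)

theorem fR_four_pi_mul_sq (hR : 0 < R) : fR R (4 * π * R ^ 2) = 0 := by
  have hπ := pi_pos
  rw [fR, sqrt_four_pi_mul_sq hR.le]
  field_simp
  ring_nf
  rw [sq_sqrt hπ.le]
  ring

theorem fR'_four_pi_mul_sq (hR : 0 < R) : fR' R (4 * π * R ^ 2) = 8 / 3 * π * R ^ 2 - 2 / R := by
  have hπ := pi_pos
  have hsπ : √π ≠ 0 := by positivity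
  rw [fR', sqrt_four_pi_mul_sq hR.le]
  field_simp
  ring

theorem fR''_neg (hR : 0 < R) (hx : 4 * π * R ^ 2 ≤ x) : fR'' R x < 0 := by
  have hπ := pi_pos
  have hx0 : 0 < x := lt_of_lt_of_le (by positivity) hx
  have hsqrt : 2 * √π * R ≤ √x := sqrt_four_pi_mul_sq hR.le ▸ sqrt_le_sqrt hx
  have hcube : √π * (8 * π * R ^ 3) ≤ x * √x :=
    calc √π * (8 * π * R ^ 3) = 4 * π * R ^ 2 * (2 * √π * R) := by ring
      _ ≤ x * √x := mul_le_mul hx hsqrt (by positivity) hx0.le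
  have hmiddle : √π / (x * √x) ≤ 1 / (8 * π * R ^ 3) := by
    rw [div_le_div_iff₀ (by positivity) (by positivity)]
    linarith
  have hfirst : 1 / (8 * π * R ^ 3) < 3 / (2 * π) * R⁻¹ ^ 3 := by
    rw [inv_pow, ← div_eq_mul_inv, div_div, div_lt_div_iff₀ (by positivity) (by positivity)]
    nlinarith [show 0 < π * R ^ 3 by positivity]
  have hlast : 0 < 128 * π ^ 3 / 3 * R ^ 6 / x ^ 3 := by positivity
  rw [fR'']
  linarith

theorem fR_concavity_roundness (R : ℝ) (hR : 0 < R) (hV : 4 / 3 * π * R ^ 3 ≤ 1) :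
    let f : ℝ → ℝ := fun x =>
      -(3 / (4 * π)) * R⁻¹ ^ 3 * x ^ 2 + (5 * R⁻¹ + 4 / 3 * π * R ^ 2) * x
        - 4 * Real.sqrt π * Real.sqrt x - 64 * π ^ 3 / 3 * R ^ 6 * x⁻¹
    f (4 * π * R ^ 2) = 0 ∧
    deriv f (4 * π * R ^ 2) ≤ 0 ∧
    (∀ x, 4 * π * R ^ 2 ≤ x → deriv (deriv f) x < 0) ∧
    (∀ x, 4 * π * R ^ 2 ≤ x → 0 ≤ f x → x = 4 * π * R ^ 2) := by
  intro f
  have hx₀ : 0 < 4 * π * R ^ 2 := by positivity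
  have hf : ∀ x, 0 < x → HasDerivAt f (fR' R x) x := fun x hx => hasDerivAt_fR R hx
  have hf₀ : f (4 * π * R ^ 2) = 0 := fR_four_pi_mul_sq hR
  have hderiv₀ : deriv f (4 * π * R ^ 2) ≤ 0 := by
    rw [(hf _ hx₀).deriv, fR'_four_pi_mul_sq hR, sub_nonpos, le_div_iff₀ hR]
    linarith
  have hconcave : ∀ x, 4 * π * R ^ 2 ≤ x → deriv (deriv f) x < 0 := fun x hx =>
    deriv_deriv_fR R (hx₀.trans_le hx) ▸ fR''_neg hR hx
  refine ⟨hf₀, hderiv₀, hconcave, fun x hx hfx => le_antisymm (not_lt.1 fun hlt => ?_) hx⟩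
  have hcont : ContinuousOn f (Ici (4 * π * R ^ 2)) := fun y hy =>
    (hf y (hx₀.trans_le hy)).continuousAt.continuousWithinAt
  have := lt_of_deriv_nonpos_of_deriv2_neg hcont (hf _ hx₀).differentiableAt hderiv₀
    (fun y hy => hconcave y hy.le) hlt
  linarith
end
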